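/- arXiv:1304.0044 — 3 statements merged into one kernel-verified Lean document; each statement's English description precedes it below -/
import Mathlib

section
/- Let m be a natural number, let e_0, …, e_m be rational numbers, and let P(t) = ∑_{i=0}^{m} (−1)^i e_i · C(t + m − i, m − i) ∈ ℚ[t]. Let d be an integer and define Q(t) = P(−t + d). Then Q(t) = ∑_{i=0}^{m} (−1)^i h_i · C(t + m − i, m − i), where h_i = (−1)^m · ∑_{k=0}^{i} (−1)^k · C(d + m + 1 − k, i − k) · e_k. -/
open Polynomial Finset

/-- The binomial coefficient polynomial `C(u, n) = u(u−1)⋯(u−n+1)/n!` for `u ∈ ℚ[t]`. -/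
noncomputable def choosePoly (u : Polynomial ℚ) (n : ℕ) : Polynomial ℚ :=
  Polynomial.C ((n.factorial : ℚ)⁻¹) * (descPochhammer ℚ n).comp u

/-- The generalized binomial coefficient `C(a, n) = a(a−1)⋯(a−n+1)/n!` for `a ∈ ℚ`. -/
noncomputable def genChoose (a : ℚ) (n : ℕ) : ℚ :=
  (descPochhammer ℚ n).eval a / n.factorial

/-!
Evaluate at `x`. With `c = d + n`, the basis element `C(-x + d + n, n)` is
`C((c + 1) + (-x - 1), n)`; Vandermonde's identity splits it into
`∑ⱼ C(c + 1, j) C(-x - 1, n - j)`, and the reflection `C(-y - 1, l) = (-1)ˡ C(y + l, l)` turns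
each `C(-x - 1, n - j)` back into a basis element `C(x + n - j, n - j)`. Applying this with
`n = m - k` to each term of `P` and collecting the coefficient of `C(x + m - i, m - i)` over the
triangle `k ≤ i ≤ m` gives `h_i`.
-/

lemma genChoose_eq_choose (a : ℚ) (n : ℕ) : genChoose a n = Ring.choose a n := by
  rw [genChoose, div_eq_iff (by positivity), mul_comm, ← nsmul_eq_mul,
    ← Ring.descPochhammer_eq_factorial_smul_choose, descPochhammer_smeval_eq_ascPochhammer,
    ascPochhammer_smeval_eq_eval, descPochhammer_eval_eq_ascPochhammer]

lemma eval_choosePoly (u : ℚ[X]) (n : ℕ) (x : ℚ) :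
    (choosePoly u n).eval x = Ring.choose (u.eval x) n := by
  rw [← genChoose_eq_choose, choosePoly, genChoose, eval_mul, eval_C, eval_comp, inv_mul_eq_div]

section BinomialRing

variable {R : Type*} [CommRing R] [BinomialRing R]

lemma Ring.choose_neg_sub_one (x : R) (l : ℕ) :
    Ring.choose (-x - 1) l = (-1) ^ l * Ring.choose (x + l) l := by
  rw [← neg_add', Ring.choose_neg, add_right_comm, add_sub_cancel_right, Units.smul_def,
    zsmul_eq_mul, Int.cast_negOnePow_natCast]

lemma Ring.choose_sub_eq_sum (c x : R) (n : ℕ) :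
    Ring.choose (c - x) n = ∑ j ∈ range (n + 1),
      (-1) ^ (n - j) * Ring.choose (c + 1) j * Ring.choose (x + (n - j : ℕ)) (n - j) := by
  rw [show c - x = (c + 1) + (-x - 1) by ring, Ring.add_choose_eq n (Commute.all _ _),
    Nat.sum_antidiagonal_eq_sum_range_succ_mk]
  refine sum_congr rfl fun j _ => ?_
  rw [Ring.choose_neg_sub_one, mul_left_comm, mul_assoc]

end BinomialRing

lemma choosePoly_comp_neg_X_add_C (a : ℚ) (n : ℕ) :
    (choosePoly (X + C (n : ℚ)) n).comp (-X + C a) = ∑ j ∈ range (n + 1),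
      C ((-1) ^ (n - j) * genChoose (a + n + 1) j) *
        choosePoly (X + C ((n - j : ℕ) : ℚ)) (n - j) := by
  refine Polynomial.funext fun x => ?_
  simp only [eval_comp, eval_finsetSum, eval_mul, eval_add, eval_neg, eval_X, eval_C,
    eval_choosePoly, genChoose_eq_choose]
  rw [show -x + a + n = (a + n) - x by ring, Ring.choose_sub_eq_sum]

/-- Lemma 1.7: if `P(t) = ∑_{i=0}^{m} (−1)^i e_i C(t+m−i, m−i)` and `Q(t) = P(−t+d)`, then
`Q(t) = ∑_{i=0}^{m} (−1)^i h_i C(t+m−i, m−i)` where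
`h_i = (−1)^m ∑_{k=0}^{i} (−1)^k C(d+m+1−k, i−k) e_k`. -/
theorem binomial_basis_coeffs_under_reflection (m : ℕ) (e : ℕ → ℚ) (d : ℤ) :
    ((∑ i ∈ Finset.range (m + 1),
        Polynomial.C ((-1) ^ i * e i) * choosePoly (X + Polynomial.C ((m - i : ℕ) : ℚ)) (m - i)).comp
      (-X + Polynomial.C (d : ℚ)))
      = ∑ i ∈ Finset.range (m + 1),
          Polynomial.C ((-1) ^ i *
              ((-1) ^ m * ∑ k ∈ Finset.range (i + 1),
                (-1) ^ k * genChoose ((d : ℚ) + m + 1 - k) (i - k) * e k)) *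
            choosePoly (X + Polynomial.C ((m - i : ℕ) : ℚ)) (m - i) := by
  have expand_lhs : ∀ k ∈ range (m + 1),
      (C ((-1) ^ k * e k) * choosePoly (X + C ((m - k : ℕ) : ℚ)) (m - k)).comp (-X + C (d : ℚ)) =
        ∑ j ∈ range (m + 1 - k), C ((-1) ^ k * e k) *
          (C ((-1) ^ (m - k - j) * genChoose (d + (m - k : ℕ) + 1) j) *
            choosePoly (X + C ((m - k - j : ℕ) : ℚ)) (m - k - j)) := by
    intro k hk
    rw [mul_comp, C_comp, choosePoly_comp_neg_X_add_C, mul_sum,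
      Nat.sub_add_comm (Nat.lt_succ_iff.mp (mem_range.mp hk))]
  rw [Polynomial.sum_comp, sum_congr rfl expand_lhs, ← sum_range_diag_flip]
  refine sum_congr rfl fun i hi => ?_
  simp only [mul_sum, map_sum, sum_mul]
  refine sum_congr rfl fun k hk => ?_
  have hki : k ≤ i := Nat.lt_succ_iff.mp (mem_range.mp hk)
  have him : i ≤ m := Nat.lt_succ_iff.mp (mem_range.mp hi)
  rw [Nat.sub_sub_sub_cancel_right hki, ← mul_assoc, ← C_mul, Nat.cast_sub (hki.trans him),
    pow_sub₀ _ (by norm_num) him, ← inv_pow, inv_neg_one]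
  congr 2
  rw [show (d : ℚ) + (m - k) + 1 = d + m + 1 - k by ring]
  ring
end

section
/- Let g ≥ 1 and let d_1, …, d_g be positive integers. Let Q(t) = ∏_{j=1}^{g} (∑_{ℓ=0}^{d_j−1} t^ℓ) ∈ ℚ[t] and set e_i = Q^{(i)}(1)/i! for i = 0, 1, 2, 3. Then e_0 ≠ 0 and e_3 = −e_2 + e_1e_2/e_0 − e_1/6 + e_1²/(2e_0) − e_1³/(3e_0²). In particular, the fourth Hilbert coefficient of a global complete intersection is a rational function of the first three. -/
/-!
Write `c_i` for the Taylor coefficients of a polynomial `P` at `1`, so that `c_i = P^{(i)}(1)/i!`.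
If `c_0 ≠ 0`, the coefficients `L_1, L_2, L_3` of `log (P(1 + s) / c_0)` are rational functions of
`c_0, …, c_3`, and they are additive under multiplication of polynomials; hence so is
`L_3 + L_2 + L_1/6`. For `P = 1 + t + ⋯ + t^{d-1}` one has `s · P(1 + s) = (1 + s)^d - 1`, so
`c_i = binom(d, i+1)`, and a direct computation shows that this combination vanishes. Therefore
it vanishes on every product of such factors, and for `Q` this is the stated relation.
-/

open Polynomial Finset

section Field

variable {K : Type*} [Field K] [CharZero K]

theorem iterate_derivative_eval_div_factorial (P : K[X]) (r : K) (i : ℕ) :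
    (derivative^[i] P).eval r / i.factorial = (taylor r P).coeff i := by
  rw [taylor_coeff, ← factorial_smul_hasseDeriv, LinearMap.smul_apply, nsmul_eq_mul, eval_mul,
    eval_natCast]
  exact mul_div_cancel_left₀ _ (Nat.cast_ne_zero.mpr i.factorial_ne_zero)

/-- `L_3 + L_2 + L_1/6`, where `L_k` is the coefficient of `s^k` in `log (p(s) / p(0))`. -/
noncomputable def logDefect (p : K[X]) : K :=
  p.coeff 3 / p.coeff 0 + p.coeff 2 / p.coeff 0 - p.coeff 1 * p.coeff 2 / p.coeff 0 ^ 2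
    + p.coeff 1 / (6 * p.coeff 0) - p.coeff 1 ^ 2 / (2 * p.coeff 0 ^ 2)
    + p.coeff 1 ^ 3 / (3 * p.coeff 0 ^ 3)

theorem logDefect_mul {p q : K[X]} (hp : p.coeff 0 ≠ 0) (hq : q.coeff 0 ≠ 0) :
    logDefect (p * q) = logDefect p + logDefect q := by
  simp only [logDefect, coeff_mul, Nat.sum_antidiagonal_eq_sum_range_succ_mk, sum_range_succ,
    sum_range_zero]
  field_simp
  ring

theorem logDefect_taylor_prod {ι : Type*} (s : Finset ι) (P : ι → K[X]) (r : K)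
    (hP : ∀ j ∈ s, (P j).eval r ≠ 0) :
    logDefect (taylor r (∏ j ∈ s, P j)) = ∑ j ∈ s, logDefect (taylor r (P j)) := by
  classical
  induction s using Finset.induction_on with
  | empty => simp [logDefect, coeff_one]
  | insert j s hj ih =>
    have hs : (taylor r (∏ j ∈ s, P j)).coeff 0 ≠ 0 := by
      rw [taylor_coeff_zero, eval_prod]
      exact prod_ne_zero_iff.mpr fun i hi => hP i (mem_insert_of_mem hi)
    have hPj : (taylor r (P j)).coeff 0 ≠ 0 := by
      rw [taylor_coeff_zero]
      exact hP j (mem_insert_self j s)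
    rw [prod_insert hj, sum_insert hj, taylor_mul, logDefect_mul hPj hs,
      ih fun i hi => hP i (mem_insert_of_mem hi)]

end Field

theorem coeff_taylor_one_geomSum {R : Type*} [CommRing R] (d k : ℕ) :
    (taylor 1 (∑ ℓ ∈ range d, X ^ ℓ : R[X])).coeff k = d.choose (k + 1) := by
  have h : X * taylor 1 (∑ ℓ ∈ range d, X ^ ℓ : R[X]) = (X + 1) ^ d - 1 := by
    calc X * taylor 1 (∑ ℓ ∈ range d, X ^ ℓ : R[X])
        = taylor 1 ((∑ ℓ ∈ range d, X ^ ℓ) * (X - 1) : R[X]) := by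
          rw [taylor_mul, map_sub, taylor_X, taylor_one, mul_comm]
          simp
      _ = (X + 1) ^ d - 1 := by
          rw [geom_sum_mul]
          simp
  rw [← coeff_X_mul, h, coeff_sub, coeff_X_add_one_pow, coeff_one]
  simp

theorem logDefect_taylor_one_geomSum {K : Type*} [Field K] [CharZero K] {d : ℕ} (hd : d ≠ 0) :
    logDefect (taylor 1 (∑ ℓ ∈ range d, X ^ ℓ : K[X])) = 0 := by
  have hd' : (d : K) ≠ 0 := Nat.cast_ne_zero.mpr hd
  simp only [logDefect, coeff_taylor_one_geomSum, Nat.cast_choose_eq_descPochhammer_div,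
    descPochhammer_succ_eval, descPochhammer_zero, eval_one]
  field_simp
  ring

theorem e3_rational_function_of_first_three_general (g : ℕ)
    (d : Fin g → ℕ) (hd : ∀ j, 0 < d j) :
    let Q : Polynomial ℚ := ∏ j, ∑ ℓ ∈ Finset.range (d j), X ^ ℓ
    let e : ℕ → ℚ := fun i => (Polynomial.derivative^[i] Q).eval 1 / i.factorial
    e 0 ≠ 0 ∧
    e 3 = -e 2 + e 1 * e 2 / e 0 - e 1 / 6 + e 1 ^ 2 / (2 * e 0) - e 1 ^ 3 / (3 * e 0 ^ 2) := by
  intro Q e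
  have he : ∀ i, e i = (taylor 1 Q).coeff i := iterate_derivative_eval_div_factorial Q 1
  have hfactor : ∀ j ∈ univ, (∑ ℓ ∈ range (d j), X ^ ℓ : ℚ[X]).eval 1 ≠ 0 := fun j _ => by
    rw [← taylor_coeff_zero, coeff_taylor_one_geomSum, Nat.choose_one_right]
    exact_mod_cast (hd j).ne'
  have h0 : (taylor 1 Q).coeff 0 ≠ 0 := by
    rw [taylor_coeff_zero, eval_prod]
    exact prod_ne_zero_iff.mpr hfactor
  have hD : logDefect (taylor 1 Q) = 0 := by
    rw [logDefect_taylor_prod _ _ _ hfactor]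
    exact sum_eq_zero fun j _ => logDefect_taylor_one_geomSum (hd j).ne'
  simp only [he]
  refine ⟨h0, ?_⟩
  rw [logDefect] at hD
  field_simp at hD ⊢
  linear_combination hD

/-- Remark 2.6: for `Q(t) = ∏_{j=1}^{g} (1 + t + ⋯ + t^{d_j−1})` and `e_i = Q^{(i)}(1)/i!`,
one has `e_0 ≠ 0` and
`e_3 = −e_2 + e_1e_2/e_0 − e_1/6 + e_1²/(2e_0) − e_1³/(3e_0²)`:
the fourth Hilbert coefficient of a global complete intersection is a rational function
of the first three. -/
theorem e3_rational_function_of_first_three (g : ℕ) (hg : 1 ≤ g)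
    (d : Fin g → ℕ) (hd : ∀ j, 0 < d j) :
    let Q : Polynomial ℚ := ∏ j, ∑ ℓ ∈ Finset.range (d j), X ^ ℓ
    let e : ℕ → ℚ := fun i => (Polynomial.derivative^[i] Q).eval 1 / i.factorial
    e 0 ≠ 0 ∧
    e 3 = -e 2 + e 1 * e 2 / e 0 - e 1 / 6 + e 1 ^ 2 / (2 * e 0) - e 1 ^ 3 / (3 * e 0 ^ 2) :=
  e3_rational_function_of_first_three_general g d hd
end

section
/- Let s ≥ 2 and let d_1, …, d_s be positive integers; let g(t) = σ_2(t^{d_1}, …, t^{d_s}) = ∑_{1≤i<j≤s} t^{d_i + d_j} ∈ ℚ[t]. Write σ_1, σ_2, σ_3 for the first three elementary symmetric functions of d_1,…,d_s. Then g(1) = s(s−1)/2, g′(1) = (s−1)σ_1, g″(1) = (s−1)(σ_1² − σ_1 − 2σ_2) + 2σ_2, and g‴(1) = (s−1)(σ_1³ − 3σ_1² + 2σ_1) − 3(s−2)σ_2(σ_1 − 2) + 3(s−4)σ_3. -/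
/-!
Differentiating termwise, `g⁽ᵏ⁾(1) = ∑_{i<j} (d_i + d_j)(d_i + d_j - 1)⋯(d_i + d_j - k + 1)`.
Writing the summand as `f(i,j) + f(j,i)` with `f` a polynomial in `d_i, d_j`, the sum over
`i < j` is the sum over all `(i, j)` minus the diagonal, hence a polynomial in `s` and the
power sums `p_m = ∑ d_i^m`. Newton's identities `2σ₂ = p₁² - p₂` and
`6σ₃ = p₁³ - 3p₁p₂ + 2p₃` translate back to elementary symmetric functions; the second comes
from `3σ₃ = ∑_{a<b} d_a d_b (p₁ - d_a - d_b)`, splitting the inner sum according to whether the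
third index lies below `a`, between `a` and `b`, or above `b`.
-/

open Polynomial Finset

/-- First elementary symmetric function of `d_1, …, d_s`. -/
def esym1 {s : ℕ} (d : Fin s → ℕ) : ℕ := ∑ j, d j

/-- Second elementary symmetric function of `d_1, …, d_s`. -/
def esym2 {s : ℕ} (d : Fin s → ℕ) : ℕ :=
  ∑ p ∈ Finset.univ.filter (fun p : Fin s × Fin s => p.1 < p.2), d p.1 * d p.2

/-- Third elementary symmetric function of `d_1, …, d_s`. -/
def esym3 {s : ℕ} (d : Fin s → ℕ) : ℕ :=
  ∑ p ∈ Finset.univ.filter (fun p : Fin s × Fin s × Fin s => p.1 < p.2.1 ∧ p.2.1 < p.2.2),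
    d p.1 * d p.2.1 * d p.2.2

section SumsOverPairs

variable {ι : Type*} [Fintype ι] [LinearOrder ι]

theorem sum_lt_pairs_eq_sum_sum_sub_sum_diag {M : Type*} [AddCommGroup M] {F : ι × ι → M}
    (f : ι → ι → M) (hF : ∀ i j, F (i, j) = f i j + f j i) :
    ∑ p : ι × ι with p.1 < p.2, F p = ∑ i, ∑ j, f i j - ∑ i, f i i := by
  have hswap : ∑ p : ι × ι with p.1 < p.2, f p.2 p.1 = ∑ p : ι × ι with p.2 < p.1, f p.1 p.2 :=
    sum_equiv (Equiv.prodComm ι ι) (by simp) (by simp)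
  have htri (i j : ι) : f i j = (if i < j then f i j else 0) + (if j < i then f i j else 0)
      + (if i = j then f i j else 0) := by
    rcases lt_trichotomy i j with h | h | h
    · simp [h, h.not_gt, h.ne]
    · simp [h]
    · simp [h, h.not_gt, h.ne']
  rw [sum_congr rfl fun p _ => hF p.1 p.2, sum_add_distrib, hswap, eq_sub_iff_add_eq]
  simp only [sum_filter, Fintype.sum_prod_type]
  conv_rhs => rw [sum_congr rfl fun i _ => sum_congr rfl fun j _ => htri i j]
  simp [sum_add_distrib]

variable {R : Type*} [CommRing R]

theorem sum_lt_pairs_add (h : ι → R) :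
    ∑ p : ι × ι with p.1 < p.2, (h p.1 + h p.2) = ((Fintype.card ι : R) - 1) * ∑ i, h i := by
  rw [sum_lt_pairs_eq_sum_sum_sub_sum_diag (fun i _ => h i) fun _ _ => rfl]
  simp [sub_mul, mul_sum]

theorem two_mul_sum_lt_pairs_mul (x : ι → R) :
    2 * ∑ p : ι × ι with p.1 < p.2, x p.1 * x p.2 = (∑ i, x i) ^ 2 - ∑ i, x i ^ 2 := by
  rw [mul_sum, sum_lt_pairs_eq_sum_sum_sub_sum_diag (fun i j => x i * x j) fun _ _ => by ring,
    sq, sum_mul_sum]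
  simp [sq]

theorem sum_sub_sub_eq_sum_lt_add_sum_between_add_sum_gt (x : ι → R) {a b : ι} (hab : a < b) :
    ∑ i, x i - x a - x b =
      ∑ c with c < a, x c + ∑ c with a < c ∧ c < b, x c + ∑ c with b < c, x c := by
  have hc (c : ι) : x c = (if c = a then x c else 0) + (if c = b then x c else 0) +
      ((if c < a then x c else 0) + (if a < c ∧ c < b then x c else 0) +
        (if b < c then x c else 0)) := by
    rw [ite_and]; split_ifs <;> first | ring1 | (exfalso; order)
  rw [sum_congr rfl fun c _ => hc c]
  simp only [sum_add_distrib, sum_ite_eq', mem_univ, if_true, sum_filter]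
  ring

theorem three_mul_sum_lt_triples (x : ι → R) :
    3 * ∑ q : ι × ι × ι with q.1 < q.2.1 ∧ q.2.1 < q.2.2, x q.1 * x q.2.1 * x q.2.2
      = ∑ p : ι × ι with p.1 < p.2, x p.1 * x p.2 * (∑ i, x i - x p.1 - x p.2) := by
  have hlow : ∑ p : ι × ι with p.1 < p.2, ∑ c with c < p.1, x p.1 * x p.2 * x c
      = ∑ q : ι × ι × ι with q.1 < q.2.1 ∧ q.2.1 < q.2.2, x q.1 * x q.2.1 * x q.2.2 := by
    rw [← sum_finset_product' ({r : (ι × ι) × ι | r.2 < r.1.1 ∧ r.1.1 < r.1.2} : Finset _) _ _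
      (by simp [and_comm])]
    exact sum_equiv ⟨fun r => (r.2, r.1), fun q => (q.2, q.1), fun _ => rfl, fun _ => rfl⟩
      (by simp) fun r _ => by simp only [Equiv.coe_fn_mk]; ring
  have hmid : ∑ p : ι × ι with p.1 < p.2, ∑ c with p.1 < c ∧ c < p.2, x p.1 * x p.2 * x c
      = ∑ q : ι × ι × ι with q.1 < q.2.1 ∧ q.2.1 < q.2.2, x q.1 * x q.2.1 * x q.2.2 := by
    rw [← sum_finset_product' ({r : (ι × ι) × ι | r.1.1 < r.2 ∧ r.2 < r.1.2} : Finset _) _ _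
      (by simp only [mem_filter, mem_univ, true_and, iff_and_self, and_imp, Prod.forall]
          exact fun _ _ _ => lt_trans)]
    exact sum_equiv ⟨fun r => (r.1.1, r.2, r.1.2), fun q => ((q.1, q.2.2), q.2.1),
      fun _ => rfl, fun _ => rfl⟩ (by simp) fun r _ => by simp only [Equiv.coe_fn_mk]; ring
  have hhigh : ∑ p : ι × ι with p.1 < p.2, ∑ c with p.2 < c, x p.1 * x p.2 * x c
      = ∑ q : ι × ι × ι with q.1 < q.2.1 ∧ q.2.1 < q.2.2, x q.1 * x q.2.1 * x q.2.2 := by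
    rw [← sum_finset_product' ({r : (ι × ι) × ι | r.1.1 < r.1.2 ∧ r.1.2 < r.2} : Finset _) _ _
      (by simp)]
    exact sum_equiv (Equiv.prodAssoc ι ι ι) (by simp) fun _ _ => rfl
  calc _ = ∑ p : ι × ι with p.1 < p.2, (∑ c with c < p.1, x p.1 * x p.2 * x c
          + ∑ c with p.1 < c ∧ c < p.2, x p.1 * x p.2 * x c
          + ∑ c with p.2 < c, x p.1 * x p.2 * x c) := by
        rw [sum_add_distrib, sum_add_distrib, hlow, hmid, hhigh]; ring
    _ = _ := sum_congr rfl fun p hp => by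
        rw [sum_sub_sub_eq_sum_lt_add_sum_between_add_sum_gt x (mem_filter.1 hp).2, mul_add,
          mul_add, mul_sum, mul_sum, mul_sum]

theorem six_mul_sum_lt_triples (x : ι → R) :
    6 * ∑ q : ι × ι × ι with q.1 < q.2.1 ∧ q.2.1 < q.2.2, x q.1 * x q.2.1 * x q.2.2
      = (∑ i, x i) ^ 3 - 3 * (∑ i, x i) * ∑ i, x i ^ 2 + 2 * ∑ i, x i ^ 3 := by
  have hcubic : ∑ p : ι × ι with p.1 < p.2, x p.1 * x p.2 * (x p.1 + x p.2)
      = (∑ i, x i ^ 2) * ∑ i, x i - ∑ i, x i ^ 3 := by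
    rw [sum_lt_pairs_eq_sum_sum_sub_sum_diag (fun i j => x i ^ 2 * x j) fun _ _ => by ring,
      ← sum_mul_sum]
    simp only [← pow_succ]
  have hsplit : ∑ p : ι × ι with p.1 < p.2, x p.1 * x p.2 * (∑ i, x i - x p.1 - x p.2)
      = (∑ i, x i) * ∑ p : ι × ι with p.1 < p.2, x p.1 * x p.2
        - ∑ p : ι × ι with p.1 < p.2, x p.1 * x p.2 * (x p.1 + x p.2) := by
    rw [mul_sum, ← sum_sub_distrib]
    exact sum_congr rfl fun _ _ => by ring
  linear_combination 2 * three_mul_sum_lt_triples x + 2 * hsplit - 2 * hcubic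
    + (∑ i, x i) * two_mul_sum_lt_pairs_mul x

theorem sum_lt_pairs_descPochhammer_two_eval (x : ι → R) :
    ∑ p : ι × ι with p.1 < p.2, (descPochhammer R 2).eval (x p.1 + x p.2)
      = ((Fintype.card ι : R) - 1) * (∑ i, x i ^ 2 - ∑ i, x i) + (∑ i, x i) ^ 2 - ∑ i, x i ^ 2 := by
  rw [sum_lt_pairs_eq_sum_sum_sub_sum_diag (fun i j => x i ^ 2 - x i + x i * x j)
    fun i j => by simp [descPochhammer_succ_eval]; ring]
  simp only [← sq, sum_add_distrib, sum_sub_distrib, ← mul_sum, ← sum_mul, sum_const, card_univ,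
    nsmul_eq_mul]
  ring

theorem sum_lt_pairs_descPochhammer_three_eval (x : ι → R) :
    ∑ p : ι × ι with p.1 < p.2, (descPochhammer R 3).eval (x p.1 + x p.2)
      = ((Fintype.card ι : R) - 1) * (∑ i, x i ^ 3 - 3 * ∑ i, x i ^ 2 + 2 * ∑ i, x i)
        + 3 * (∑ i, x i ^ 2) * ∑ i, x i - 3 * (∑ i, x i) ^ 2 - 3 * ∑ i, x i ^ 3
        + 3 * ∑ i, x i ^ 2 := by
  rw [sum_lt_pairs_eq_sum_sum_sub_sum_diag
    (fun i j => x i ^ 3 - 3 * x i ^ 2 + 2 * x i + 3 * x i ^ 2 * x j - 3 * x i * x j)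
    fun i j => by simp [descPochhammer_succ_eval]; ring]
  simp only [mul_assoc, ← sq, ← pow_succ, sum_add_distrib, sum_sub_distrib, ← mul_sum, ← sum_mul,
    sum_const, card_univ, nsmul_eq_mul]
  ring

end SumsOverPairs

theorem eval_one_iterate_derivative_sum_X_pow {α R : Type*} [CommRing R] (s : Finset α)
    (e : α → ℕ) (k : ℕ) :
    (derivative^[k] (∑ i ∈ s, (X : R[X]) ^ e i)).eval 1
      = ∑ i ∈ s, (descPochhammer R k).eval (e i : R) := by
  simp [iterate_derivative_sum, iterate_derivative_X_pow_eq_smul, eval_finsetSum,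
    descPochhammer_eval_eq_descFactorial]

theorem taylor_coeffs_esym2_powers_general (s : ℕ) (d : Fin s → ℕ) :
    let g : Polynomial ℚ :=
      ∑ p ∈ Finset.univ.filter (fun p : Fin s × Fin s => p.1 < p.2), X ^ (d p.1 + d p.2)
    let σ₁ : ℚ := (esym1 d : ℚ)
    let σ₂ : ℚ := (esym2 d : ℚ)
    let σ₃ : ℚ := (esym3 d : ℚ)
    g.eval 1 = (s : ℚ) * ((s : ℚ) - 1) / 2 ∧
    (Polynomial.derivative g).eval 1 = ((s : ℚ) - 1) * σ₁ ∧
    (Polynomial.derivative^[2] g).eval 1 = ((s : ℚ) - 1) * (σ₁ ^ 2 - σ₁ - 2 * σ₂) + 2 * σ₂ ∧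
    (Polynomial.derivative^[3] g).eval 1
      = ((s : ℚ) - 1) * (σ₁ ^ 3 - 3 * σ₁ ^ 2 + 2 * σ₁)
        - 3 * ((s : ℚ) - 2) * σ₂ * (σ₁ - 2) + 3 * ((s : ℚ) - 4) * σ₃ := by
  intro g σ₁ σ₂ σ₃
  set x : Fin s → ℚ := fun i => (d i : ℚ)
  have hg (k : ℕ) : (derivative^[k] g).eval 1
      = ∑ p : Fin s × Fin s with p.1 < p.2, (descPochhammer ℚ k).eval (x p.1 + x p.2) := by
    simp [g, x, eval_one_iterate_derivative_sum_X_pow]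
  have hσ₁ : σ₁ = ∑ i, x i := by simp [σ₁, esym1, x]
  have hσ₂ : 2 * σ₂ = (∑ i, x i) ^ 2 - ∑ i, x i ^ 2 := by
    simpa [σ₂, esym2, x] using two_mul_sum_lt_pairs_mul x
  have hσ₃ : 6 * σ₃ = (∑ i, x i) ^ 3 - 3 * (∑ i, x i) * ∑ i, x i ^ 2 + 2 * ∑ i, x i ^ 3 := by
    simpa [σ₃, esym3, x] using six_mul_sum_lt_triples x
  refine ⟨?_, ?_, ?_, ?_⟩
  · have h := sum_lt_pairs_add fun _ : Fin s => (1 : ℚ)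
    rw [← Function.iterate_zero_apply derivative g, hg 0]
    simp only [descPochhammer_zero, eval_one, sum_const, nsmul_eq_mul, mul_one, card_univ,
      Fintype.card_fin] at h ⊢
    linear_combination h / 2
  · rw [← Function.iterate_one derivative, hg 1, hσ₁]
    simpa using sum_lt_pairs_add x
  · rw [hg 2, sum_lt_pairs_descPochhammer_two_eval, hσ₁, Fintype.card_fin]
    linear_combination ((s : ℚ) - 2) * hσ₂
  · rw [hg 3, sum_lt_pairs_descPochhammer_three_eval, hσ₁, Fintype.card_fin]
    linear_combination (3 * ((s : ℚ) - 2) * (∑ i, x i - 2) / 2) * hσ₂ - (((s : ℚ) - 4) / 2) * hσ₃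

/-- The Taylor expansion of `g(t) = σ₂(t^{d_1},…,t^{d_s}) = ∑_{i<j} t^{d_i+d_j}` at `t = 1`
(Section 2.3): `g(1) = s(s−1)/2`, `g′(1) = (s−1)σ₁`,
`g″(1) = (s−1)(σ₁² − σ₁ − 2σ₂) + 2σ₂`, and
`g‴(1) = (s−1)(σ₁³ − 3σ₁² + 2σ₁) − 3(s−2)σ₂(σ₁ − 2) + 3(s−4)σ₃`. -/
theorem taylor_coeffs_esym2_powers (s : ℕ) (hs : 2 ≤ s) (d : Fin s → ℕ) (hd : ∀ j, 0 < d j) :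
    let g : Polynomial ℚ :=
      ∑ p ∈ Finset.univ.filter (fun p : Fin s × Fin s => p.1 < p.2), X ^ (d p.1 + d p.2)
    let σ₁ : ℚ := (esym1 d : ℚ)
    let σ₂ : ℚ := (esym2 d : ℚ)
    let σ₃ : ℚ := (esym3 d : ℚ)
    g.eval 1 = (s : ℚ) * ((s : ℚ) - 1) / 2 ∧
    (Polynomial.derivative g).eval 1 = ((s : ℚ) - 1) * σ₁ ∧
    (Polynomial.derivative^[2] g).eval 1 = ((s : ℚ) - 1) * (σ₁ ^ 2 - σ₁ - 2 * σ₂) + 2 * σ₂ ∧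
    (Polynomial.derivative^[3] g).eval 1
      = ((s : ℚ) - 1) * (σ₁ ^ 3 - 3 * σ₁ ^ 2 + 2 * σ₁)
        - 3 * ((s : ℚ) - 2) * σ₂ * (σ₁ - 2) + 3 * ((s : ℚ) - 4) * σ₃ :=
  taylor_coeffs_esym2_powers_general s d
end
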